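/- Let 0 < α < 1. For every x ≥ 0 one has 0 ≤ E_{α,1}(-x) ≤ 1 and 0 ≤ E_{α,α}(-x) ≤ α·Γ(2)/Γ(1+α) = α/Γ(1+α). (These are the scalar contraction and stability bounds underlying the estimates ‖S₁(t)‖ ≤ 1 and ‖S₂(t)‖ ≤ αΓ(2)/Γ(1+α) for the fractional semigroups S₁(t) = E_{α,1}(-t^α A), S₂(t) = E_{α,α}(-t^α A) generated by a positive operator A.) -/

import Mathlib

/-!
Write `D_s(z) = Σ_k Γ(k+s+1)/Γ(α(k+s)+1) · z^k/k!` (termwise the `s`-th derivative of `E_{α,1}`),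
so that `E_{α,1} = D_0` and `E_{α,α} = α D_1`; it suffices that `0 ≤ D_s(-x) ≤ Γ(s+1)/Γ(αs+1)`
for `x ≥ 0`.

By Euler's product formula, `Γ(m+1)/Γ(αm+1)` is the limit of the increasing sequence
`n^{(1-α)m} ∏_{j ≤ n} (αm+1+j)/(m+1+j)`. Replacing the coefficients of `D_s` by these products
gives series `F_n` with `n^{(1-α)s} F_{n+1}(n^{1-α} x) → D_s(-x)` by dominated convergence, and
`F_0(y) = e^{-y}`, `F_{n+1}(y) = α F_n(y) + (1-α)(n+1) ∫₀¹ t^{n+s} F_n(ty) dt`.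
This recursion preserves nonnegativity and antitonicity, so `0 ≤ F_{n+1}(y) ≤ F_{n+1}(0)`, and the
rescaled `F_{n+1}(0)` is an approximation of `Γ(s+1)/Γ(αs+1)` from below.
-/

/-- The two-parameter Mittag-Leffler function `E_{α,β}(t) = Σ_{k=0}^∞ t^k / Γ(αk + β)`. -/
noncomputable def mittagLeffler (α β t : ℝ) : ℝ :=
  ∑' k : ℕ, t ^ k / Real.Gamma (α * k + β)

open Real Filter Topology Finset MeasureTheory
open scoped Nat

noncomputable def pochhammerRatio (a b : ℝ) (n : ℕ) : ℝ :=
  ∏ j ∈ range n, (a + j) / (b + j)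

section pochhammerRatio

variable {a b : ℝ}

lemma pochhammerRatio_succ (n : ℕ) :
    pochhammerRatio a b (n + 1) = pochhammerRatio a b n * ((a + n) / (b + n)) :=
  prod_range_succ _ _

lemma pochhammerRatio_nonneg (ha : 0 ≤ a) (hb : 0 ≤ b) (n : ℕ) : 0 ≤ pochhammerRatio a b n :=
  prod_nonneg fun j _ => by positivity

lemma pochhammerRatio_le_one (ha : 0 ≤ a) (hab : a ≤ b) (n : ℕ) : pochhammerRatio a b n ≤ 1 :=
  prod_le_one (fun j _ => div_nonneg (by positivity) (by positivity [ha.trans hab]))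
    fun j _ => div_le_one_of_le₀ (by linarith) (by positivity [ha.trans hab])

lemma rpow_sub_mul_pochhammerRatio_eq (ha : 0 < a) (hb : 0 < b) {n : ℕ} (hn : n ≠ 0) :
    (n : ℝ) ^ (b - a) * pochhammerRatio a b (n + 1) = GammaSeq b n / GammaSeq a n := by
  have hn' : (0 : ℝ) < n := by positivity
  have hA : ∏ j ∈ range (n + 1), (a + j) ≠ 0 := prod_ne_zero_iff.2 fun j _ => by positivity
  have hB : ∏ j ∈ range (n + 1), (b + j) ≠ 0 := prod_ne_zero_iff.2 fun j _ => by positivity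
  rw [GammaSeq, GammaSeq, pochhammerRatio, prod_div_distrib, rpow_sub hn']
  field_simp

lemma div_le_one_add_inv_rpow (ha : 0 ≤ a) (hab : a ≤ b) {y : ℝ} (hy : 0 < y) :
    (b + (y + 1)) / (a + (y + 1)) ≤ (1 + y⁻¹) ^ (b - a) := by
  have hlog : (y + 1)⁻¹ ≤ log (1 + y⁻¹) := by
    convert one_sub_inv_le_log_of_pos (x := 1 + y⁻¹) (by positivity) using 1
    field_simp
    ring
  calc (b + (y + 1)) / (a + (y + 1)) = (b - a) / (a + (y + 1)) + 1 := by
        field_simp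
        ring
    _ ≤ (b - a) / (y + 1) + 1 := by
        gcongr ?_ + 1
        exact div_le_div_of_nonneg_left (by linarith) (by positivity) (by linarith)
    _ ≤ exp ((b - a) / (y + 1)) := add_one_le_exp _
    _ ≤ exp (log (1 + y⁻¹) * (b - a)) := by
        rw [div_eq_mul_inv, mul_comm]
        gcongr
    _ = (1 + y⁻¹) ^ (b - a) := (rpow_def_of_pos (by positivity) _).symm

lemma monotone_rpow_sub_mul_pochhammerRatio (ha : 0 ≤ a) (hab : a ≤ b) :
    Monotone fun n : ℕ => ((n + 1 : ℕ) : ℝ) ^ (b - a) * pochhammerRatio a b (n + 2) := by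
  refine monotone_nat_of_le_succ fun n => ?_
  have hn : (0 : ℝ) < (n + 1 : ℕ) := by positivity
  have hb : (0 : ℝ) < b + (n + 2 : ℕ) := by positivity [ha.trans hab]
  have hstep := div_le_one_add_inv_rpow ha hab hn
  rw [show ((n + 1 : ℕ) : ℝ) + 1 = (n + 2 : ℕ) by push_cast; ring,
    div_le_iff₀ (by positivity)] at hstep
  have hgain :
      1 ≤ (1 + ((n + 1 : ℕ) : ℝ)⁻¹) ^ (b - a) * ((a + (n + 2 : ℕ)) / (b + (n + 2 : ℕ))) := by
    rw [mul_div_assoc', le_div_iff₀ hb]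
    linarith
  have hsplit : ((n + 1 + 1 : ℕ) : ℝ) ^ (b - a) =
      ((n + 1 : ℕ) : ℝ) ^ (b - a) * (1 + ((n + 1 : ℕ) : ℝ)⁻¹) ^ (b - a) := by
    rw [← mul_rpow hn.le (by positivity)]
    congr 1
    field_simp
    push_cast
    ring
  have hP := pochhammerRatio_nonneg ha (ha.trans hab) (n + 2)
  calc ((n + 1 : ℕ) : ℝ) ^ (b - a) * pochhammerRatio a b (n + 2)
      ≤ ((n + 1 : ℕ) : ℝ) ^ (b - a) * pochhammerRatio a b (n + 2) *
        ((1 + ((n + 1 : ℕ) : ℝ)⁻¹) ^ (b - a) * ((a + (n + 2 : ℕ)) / (b + (n + 2 : ℕ)))) :=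
        le_mul_of_one_le_right (by positivity) hgain
    _ = _ := by
        rw [hsplit, pochhammerRatio_succ (n + 2)]
        ring

lemma tendsto_rpow_sub_mul_pochhammerRatio (ha : 0 < a) (hb : 0 < b) :
    Tendsto (fun n : ℕ => (n : ℝ) ^ (b - a) * pochhammerRatio a b (n + 1)) atTop
      (𝓝 (Gamma b / Gamma a)) :=
  ((GammaSeq_tendsto_Gamma b).div (GammaSeq_tendsto_Gamma a) (Gamma_pos_of_pos ha).ne').congr'
    (eventually_ne_atTop 0 |>.mono fun _ hn => (rpow_sub_mul_pochhammerRatio_eq ha hb hn).symm)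

lemma rpow_sub_mul_pochhammerRatio_le (ha : 0 < a) (hab : a ≤ b) {n : ℕ} (hn : n ≠ 0) :
    (n : ℝ) ^ (b - a) * pochhammerRatio a b (n + 1) ≤ Gamma b / Gamma a := by
  obtain ⟨m, rfl⟩ := Nat.exists_eq_succ_of_ne_zero hn
  exact (monotone_rpow_sub_mul_pochhammerRatio ha.le hab).ge_of_tendsto
    ((tendsto_add_atTop_iff_nat 1).2 (tendsto_rpow_sub_mul_pochhammerRatio ha (ha.trans_le hab))) m

end pochhammerRatio

section GammaRatio

variable {α : ℝ}

lemma Gamma_add_one_le_rpow_mul_Gamma_add (hα0 : 0 < α) (hα1 : α < 1) {y : ℝ} (hy : 0 < y) :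
    Gamma (y + 1) ≤ (y + α) ^ (1 - α) * Gamma (y + α) := by
  have hyα : 0 < y + α := by linarith
  have hG : 0 ≤ Gamma (y + α) := (Gamma_pos_of_pos hyα).le
  have hconv := Gamma_mul_add_mul_le_rpow_Gamma_mul_rpow_Gamma (s := y + α) (t := y + α + 1)
    hyα (by linarith) hα0 (sub_pos.2 hα1) (add_sub_cancel α 1)
  rwa [show α * (y + α) + (1 - α) * (y + α + 1) = y + 1 by ring, Gamma_add_one hyα.ne',
    mul_rpow hyα.le hG, mul_left_comm, ← rpow_add' hG (by norm_num), add_sub_cancel,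
    rpow_one] at hconv

lemma tendsto_Gamma_div_Gamma_add (hα0 : 0 < α) (hα1 : α < 1) :
    Tendsto (fun y => Gamma y / Gamma (y + α)) atTop (𝓝 0) := by
  have hlim : Tendsto (fun y => (y + α) ^ (-α) * (1 + α / y)) atTop (𝓝 (0 * (1 + 0))) :=
    ((tendsto_rpow_neg_atTop hα0).comp (tendsto_atTop_add_const_right _ α tendsto_id)).mul
      (tendsto_const_nhds.add (tendsto_const_nhds.div_atTop tendsto_id))
  rw [zero_mul] at hlim
  refine squeeze_zero' ?_ ?_ hlim
  · filter_upwards [eventually_gt_atTop 0] with y hy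
    exact div_nonneg (Gamma_pos_of_pos hy).le (Gamma_pos_of_pos (by linarith)).le
  · filter_upwards [eventually_gt_atTop 0] with y hy
    have hyα : 0 < y + α := by linarith
    have hbound := Gamma_add_one_le_rpow_mul_Gamma_add hα0 hα1 hy
    rw [Gamma_add_one hy.ne'] at hbound
    rw [div_le_iff₀ (Gamma_pos_of_pos hyα)]
    calc Gamma y = y * Gamma y / y := by field_simp
      _ ≤ (y + α) ^ (1 - α) * Gamma (y + α) / y := by gcongr
      _ = (y + α) ^ (-α) * (1 + α / y) * Gamma (y + α) := by
        rw [sub_eq_neg_add, rpow_add hyα, rpow_one]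
        field_simp

end GammaRatio

noncomputable def mittagLefflerDerivSeries (α : ℝ) (s : ℕ) (z : ℝ) : ℝ :=
  ∑' k : ℕ, Gamma ((k + s : ℕ) + 1) / Gamma (α * (k + s : ℕ) + 1) / k ! * z ^ k

section mittagLefflerDerivSeries

variable {α : ℝ}

lemma summable_mittagLefflerDerivSeries (hα0 : 0 < α) (hα1 : α < 1) (s : ℕ) (z : ℝ) :
    Summable fun k : ℕ =>
      Gamma ((k + s : ℕ) + 1) / Gamma (α * (k + s : ℕ) + 1) / k ! * z ^ k := by
  set y : ℕ → ℝ := fun k => α * (k + s : ℕ) + 1 with hy_def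
  have hy : Tendsto y atTop atTop :=
    tendsto_atTop_add_const_right _ 1 (((tendsto_natCast_atTop_atTop (R := ℝ)).comp
      (tendsto_add_atTop_nat s)).const_mul_atTop hα0)
  set ε : ℝ := (2 * (s + 1) * (|z| + 1))⁻¹
  have hsmall : ∀ᶠ k in atTop, Gamma (y k) / Gamma (y k + α) ≤ ε :=
    hy.eventually ((tendsto_Gamma_div_Gamma_add hα0 hα1).eventually (ge_mem_nhds (by positivity)))
  refine summable_of_ratio_norm_eventually_le (r := 1 / 2) (by norm_num) ?_
  filter_upwards [hsmall] with k hk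
  have hG : 0 < Gamma (y k) := Gamma_pos_of_pos (by positivity)
  have hGα : 0 < Gamma (y k + α) := Gamma_pos_of_pos (by positivity)
  have hm : 0 < ((k + s : ℕ) : ℝ) + 1 := by positivity
  have hstep :
      Gamma ((k + 1 + s : ℕ) + 1) / Gamma (α * (k + 1 + s : ℕ) + 1) / (k + 1) ! * z ^ (k + 1) =
        Gamma ((k + s : ℕ) + 1) / Gamma (y k) / k ! * z ^ k *
          (z * ((((k + s : ℕ) : ℝ) + 1) / (k + 1)) * (Gamma (y k) / Gamma (y k + α))) := by
    rw [show ((k + 1 + s : ℕ) : ℝ) = ((k + s : ℕ) : ℝ) + 1 by push_cast; ring,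
      Gamma_add_one hm.ne', show α * (((k + s : ℕ) : ℝ) + 1) + 1 = y k + α by
        simp only [hy_def]; ring, Nat.factorial_succ, pow_succ]
    push_cast
    field_simp
  have hratio : (((k + s : ℕ) : ℝ) + 1) / (k + 1) ≤ s + 1 := by
    rw [div_le_iff₀ (by positivity)]
    push_cast
    nlinarith [(k.cast_nonneg : (0 : ℝ) ≤ k), (s.cast_nonneg : (0 : ℝ) ≤ s)]
  rw [hstep, norm_mul, mul_comm (1 / 2 : ℝ)]
  gcongr
  rw [norm_mul, norm_mul, Real.norm_eq_abs, Real.norm_of_nonneg (by positivity),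
    Real.norm_of_nonneg (by positivity)]
  calc |z| * ((((k + s : ℕ) : ℝ) + 1) / (k + 1)) * (Gamma (y k) / Gamma (y k + α))
      ≤ |z| * (s + 1) * ε := by gcongr
    _ = |z| / (|z| + 1) / 2 := by simp only [ε]; field_simp
    _ ≤ 1 / 2 := by
        gcongr
        rw [div_le_one (by positivity)]
        linarith

lemma mittagLeffler_one_eq (α z : ℝ) : mittagLeffler α 1 z = mittagLefflerDerivSeries α 0 z := by
  refine tsum_congr fun k => ?_
  rw [add_zero, Gamma_nat_eq_factorial]
  field_simp

lemma mittagLeffler_self_eq (hα : 0 < α) (z : ℝ) :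
    mittagLeffler α α z = α * mittagLefflerDerivSeries α 1 z := by
  rw [mittagLefflerDerivSeries, ← tsum_mul_left]
  refine tsum_congr fun k => ?_
  have hpos : 0 < α * k + α := by positivity
  rw [Gamma_nat_eq_factorial, show α * ((k + 1 : ℕ) : ℝ) + 1 = (α * k + α) + 1 by push_cast; ring,
    Gamma_add_one hpos.ne', Nat.factorial_succ]
  have := Gamma_pos_of_pos hpos
  push_cast
  field_simp

end mittagLefflerDerivSeries

lemma hasSum_intervalIntegral_pow_mul_tsum {a : ℕ → ℝ} {x : ℝ}
    (ha : Summable fun k => |a k| * |x| ^ k) (m : ℕ) :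
    HasSum (fun k => a k * x ^ k / (k + m + 1))
      (∫ t in (0 : ℝ)..1, t ^ m * ∑' k, a k * (t * x) ^ k) := by
  have hpow : ∀ t ∈ Set.Ioc (0 : ℝ) 1, ∀ k, ‖a k * (t * x) ^ k‖ ≤ |a k| * |x| ^ k := by
    intro t ht k
    rw [norm_mul, norm_pow, norm_mul, Real.norm_eq_abs, Real.norm_eq_abs, Real.norm_eq_abs,
      abs_of_pos ht.1]
    gcongr
    · exact mul_nonneg ht.1.le (abs_nonneg x)
    · exact mul_le_of_le_one_left (abs_nonneg x) ht.2
  have hsum := intervalIntegral.hasSum_integral_of_dominated_convergence (μ := volume)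
    (F := fun k t => t ^ m * (a k * (t * x) ^ k)) (fun k _ => |a k| * |x| ^ k)
    (fun k => Continuous.aestronglyMeasurable (by fun_prop))
    (fun k => ae_of_all _ fun t ht => by
      rw [Set.uIoc_of_le zero_le_one] at ht
      rw [norm_mul, norm_pow, Real.norm_eq_abs, abs_of_pos ht.1]
      exact (mul_le_of_le_one_left (norm_nonneg _) (pow_le_one₀ ht.1.le ht.2)).trans (hpow t ht k))
    (ae_of_all _ fun _ _ => ha) intervalIntegrable_const
    (ae_of_all _ fun t ht => by
      rw [Set.uIoc_of_le zero_le_one] at ht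
      exact (ha.of_norm_bounded (hpow t ht)).hasSum.mul_left (t ^ m))
  have hterm : (fun k : ℕ => a k * x ^ k / (k + m + 1)) =
      fun k => ∫ t in (0 : ℝ)..1, t ^ m * (a k * (t * x) ^ k) := by
    funext k
    have hint :
        (fun t : ℝ => t ^ m * (a k * (t * x) ^ k)) = fun t => a k * x ^ k * t ^ (k + m) := by
      funext t
      ring
    rw [hint, intervalIntegral.integral_const_mul, integral_pow]
    simp [div_eq_mul_inv, add_assoc]
  rw [hterm]
  exact hsum

lemma Antitone.intervalIntegrable_comp_mul_right {f : ℝ → ℝ} (hf : Antitone f) (x a b : ℝ) :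
    IntervalIntegrable (fun t => f (t * x)) volume a b := by
  rcases le_total 0 x with hx | hx
  · exact (hf.comp_monotone (monotone_mul_right_of_nonneg hx)).intervalIntegrable
  · exact (hf.comp (antitone_mul_right hx)).intervalIntegrable

lemma intervalIntegral_pow_mul_comp_mul_nonneg {f : ℝ → ℝ} (hf : ∀ x, 0 ≤ f x) (m : ℕ) (x : ℝ) :
    0 ≤ ∫ t in (0 : ℝ)..1, t ^ m * f (t * x) :=
  intervalIntegral.integral_nonneg zero_le_one fun _ ht => mul_nonneg (pow_nonneg ht.1 m) (hf _)

lemma antitone_intervalIntegral_pow_mul_comp_mul {f : ℝ → ℝ} (hf : Antitone f) (m : ℕ) :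
    Antitone fun x => ∫ t in (0 : ℝ)..1, t ^ m * f (t * x) := fun x y hxy =>
  intervalIntegral.integral_mono_on zero_le_one
    ((hf.intervalIntegrable_comp_mul_right y 0 1).continuousOn_mul (by fun_prop))
    ((hf.intervalIntegrable_comp_mul_right x 0 1).continuousOn_mul (by fun_prop))
    fun t ht => mul_le_mul_of_nonneg_left (hf (mul_le_mul_of_nonneg_left hxy ht.1))
      (pow_nonneg ht.1 m)

noncomputable def mittagLefflerApprox (α : ℝ) (s n : ℕ) (x : ℝ) : ℝ :=
  ∑' k : ℕ, pochhammerRatio (α * (k + s : ℕ) + 1) ((k + s : ℕ) + 1) n / k ! * (-x) ^ k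

section mittagLefflerApprox

variable {α : ℝ} (s : ℕ)

lemma summable_abs_mittagLefflerApprox (hα0 : 0 ≤ α) (hα1 : α ≤ 1) (n : ℕ) (x : ℝ) :
    Summable fun k : ℕ =>
      |pochhammerRatio (α * (k + s : ℕ) + 1) ((k + s : ℕ) + 1) n / k !| * |x| ^ k := by
  refine (Real.summable_pow_div_factorial |x|).of_nonneg_of_le (fun k => by positivity) fun k => ?_
  have hpos : (0 : ℝ) ≤ α * ((k + s : ℕ) : ℝ) + 1 := by positivity
  have hle : α * ((k + s : ℕ) : ℝ) + 1 ≤ (k + s : ℕ) + 1 := by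
    nlinarith [((k + s : ℕ).cast_nonneg : (0 : ℝ) ≤ (k + s : ℕ))]
  rw [abs_div, abs_of_nonneg (pochhammerRatio_nonneg hpos (hpos.trans hle) n), Nat.abs_cast,
    div_mul_eq_mul_div, mul_comm]
  gcongr
  exact mul_le_of_le_one_right (by positivity) (pochhammerRatio_le_one hpos hle n)

lemma hasSum_mittagLefflerApprox (hα0 : 0 ≤ α) (hα1 : α ≤ 1) (n : ℕ) (x : ℝ) :
    HasSum (fun k : ℕ => pochhammerRatio (α * (k + s : ℕ) + 1) ((k + s : ℕ) + 1) n / k ! * (-x) ^ k)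
      (mittagLefflerApprox α s n x) :=
  (((summable_abs_mittagLefflerApprox s hα0 hα1 n (-x)).congr fun k => by
    rw [abs_mul, abs_pow]).of_abs).hasSum

lemma mittagLefflerApprox_zero (x : ℝ) : mittagLefflerApprox α s 0 x = exp (-x) := by
  simp [mittagLefflerApprox, pochhammerRatio, exp_eq_exp_ℝ, NormedSpace.exp_eq_tsum_div,
    div_eq_inv_mul]

lemma mittagLefflerApprox_succ (hα0 : 0 ≤ α) (hα1 : α ≤ 1) (n : ℕ) (x : ℝ) :
    mittagLefflerApprox α s (n + 1) x = α * mittagLefflerApprox α s n x +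
      (1 - α) * (n + 1) * ∫ t in (0 : ℝ)..1, t ^ (n + s) * mittagLefflerApprox α s n (t * x) := by
  have hint := hasSum_intervalIntegral_pow_mul_tsum
    (summable_abs_mittagLefflerApprox s hα0 hα1 n (-x)) (n + s)
  simp only [mul_neg] at hint
  have hrec := ((hasSum_mittagLefflerApprox s hα0 hα1 n x).mul_left α).add
    (hint.mul_left ((1 - α) * (n + 1)))
  have hcoeff : ∀ k : ℕ,
      pochhammerRatio (α * (k + s : ℕ) + 1) ((k + s : ℕ) + 1) (n + 1) / k ! * (-x) ^ k =
        α * (pochhammerRatio (α * (k + s : ℕ) + 1) ((k + s : ℕ) + 1) n / k ! * (-x) ^ k) +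
        (1 - α) * (n + 1) * (pochhammerRatio (α * (k + s : ℕ) + 1) ((k + s : ℕ) + 1) n / k ! *
          (-x) ^ k / (k + (n + s : ℕ) + 1)) := fun k => by
    rw [pochhammerRatio_succ]
    push_cast
    field_simp
    ring
  simp_rw [← hcoeff] at hrec
  exact (hasSum_mittagLefflerApprox s hα0 hα1 (n + 1) x).unique hrec

lemma mittagLefflerApprox_nonneg (hα0 : 0 ≤ α) (hα1 : α ≤ 1) (n : ℕ) (x : ℝ) :
    0 ≤ mittagLefflerApprox α s n x := by
  induction n generalizing x with
  | zero => exact mittagLefflerApprox_zero s x ▸ (exp_pos _).le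
  | succ n ih =>
    rw [mittagLefflerApprox_succ s hα0 hα1]
    have := intervalIntegral_pow_mul_comp_mul_nonneg ih (n + s) x
    have := ih x
    have : 0 ≤ 1 - α := by linarith
    positivity

lemma antitone_mittagLefflerApprox (hα0 : 0 ≤ α) (hα1 : α ≤ 1) (n : ℕ) :
    Antitone (mittagLefflerApprox α s n) := by
  induction n with
  | zero => exact fun x y hxy => by simpa [mittagLefflerApprox_zero] using hxy
  | succ n ih =>
    intro x y hxy
    simp only [mittagLefflerApprox_succ s hα0 hα1]
    have := antitone_intervalIntegral_pow_mul_comp_mul ih (n + s) hxy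
    have := ih hxy
    have : 0 ≤ 1 - α := by linarith
    gcongr

lemma mittagLefflerApprox_apply_zero (n : ℕ) :
    mittagLefflerApprox α s n 0 = pochhammerRatio (α * s + 1) (s + 1) n := by
  rw [mittagLefflerApprox, tsum_eq_single 0 fun k hk => by simp [zero_pow hk]]
  simp

lemma rpow_mul_mittagLefflerApprox_rpow_mul {n : ℕ} (hn : n ≠ 0) (x : ℝ) :
    (n : ℝ) ^ ((1 - α) * s) * mittagLefflerApprox α s (n + 1) ((n : ℝ) ^ (1 - α) * x) =
      ∑' k : ℕ, (n : ℝ) ^ (((k + s : ℕ) + 1 : ℝ) - (α * (k + s : ℕ) + 1)) *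
        pochhammerRatio (α * (k + s : ℕ) + 1) ((k + s : ℕ) + 1) (n + 1) / k ! * (-x) ^ k := by
  have hn' : (0 : ℝ) < n := by positivity
  rw [mittagLefflerApprox, ← tsum_mul_left]
  congr 1
  funext k
  rw [← mul_neg, mul_pow, ← rpow_natCast ((n : ℝ) ^ (1 - α)), ← rpow_mul hn'.le,
    show (((k + s : ℕ) + 1 : ℝ) - (α * (k + s : ℕ) + 1)) = (1 - α) * s + (1 - α) * k by
      push_cast; ring, rpow_add hn']
  ring

lemma tendsto_rpow_mul_mittagLefflerApprox_rpow_mul (hα0 : 0 < α) (hα1 : α < 1) (x : ℝ) :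
    Tendsto (fun n : ℕ => (n : ℝ) ^ ((1 - α) * s) *
      mittagLefflerApprox α s (n + 1) ((n : ℝ) ^ (1 - α) * x)) atTop
      (𝓝 (mittagLefflerDerivSeries α s (-x))) := by
  refine (tendsto_tsum_of_dominated_convergence (summable_mittagLefflerDerivSeries hα0 hα1 s |x|)
    (fun k => ((tendsto_rpow_sub_mul_pochhammerRatio (by positivity) (by positivity)).div_const
      _).mul_const _) ?_).congr' ?_
  · filter_upwards [eventually_ne_atTop 0] with n hn k
    have ha : (0 : ℝ) < α * (k + s : ℕ) + 1 := by positivity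
    have hab : α * ((k + s : ℕ) : ℝ) + 1 ≤ (k + s : ℕ) + 1 := by
      nlinarith [((k + s : ℕ).cast_nonneg : (0 : ℝ) ≤ (k + s : ℕ))]
    rw [norm_mul, norm_div, norm_pow, norm_neg, Real.norm_eq_abs, Real.norm_eq_abs,
      Real.norm_eq_abs, Nat.abs_cast, abs_of_nonneg (mul_nonneg (by positivity)
        (pochhammerRatio_nonneg ha.le (ha.le.trans hab) _))]
    gcongr
    exact rpow_sub_mul_pochhammerRatio_le ha hab hn
  · filter_upwards [eventually_ne_atTop 0] with n hn
    exact (rpow_mul_mittagLefflerApprox_rpow_mul s hn x).symm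

lemma mittagLefflerDerivSeries_neg_mem_Icc (hα0 : 0 < α) (hα1 : α < 1) {x : ℝ} (hx : 0 ≤ x) :
    mittagLefflerDerivSeries α s (-x) ∈ Set.Icc 0 (Gamma (s + 1) / Gamma (α * s + 1)) := by
  have hlim := tendsto_rpow_mul_mittagLefflerApprox_rpow_mul s hα0 hα1 x
  refine ⟨ge_of_tendsto' hlim fun n => mul_nonneg (by positivity)
    (mittagLefflerApprox_nonneg s hα0.le hα1.le _ _), le_of_tendsto hlim ?_⟩
  filter_upwards [eventually_ne_atTop 0] with n hn
  have hab : α * (s : ℝ) + 1 ≤ s + 1 := by nlinarith [(s.cast_nonneg : (0 : ℝ) ≤ s)]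
  calc (n : ℝ) ^ ((1 - α) * s) * mittagLefflerApprox α s (n + 1) ((n : ℝ) ^ (1 - α) * x)
      ≤ (n : ℝ) ^ ((1 - α) * s) * mittagLefflerApprox α s (n + 1) 0 := by
        gcongr
        exact antitone_mittagLefflerApprox s hα0.le hα1.le _ (by positivity)
    _ = (n : ℝ) ^ ((s + 1 : ℝ) - (α * s + 1)) * pochhammerRatio (α * s + 1) (s + 1) (n + 1) := by
        rw [mittagLefflerApprox_apply_zero]
        ring_nf
    _ ≤ Gamma (s + 1) / Gamma (α * s + 1) :=
        rpow_sub_mul_pochhammerRatio_le (by positivity) hab hn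

end mittagLefflerApprox

/-- For `0 < α < 1` and every `x ≥ 0`:
`0 ≤ E_{α,1}(-x) ≤ 1` and `0 ≤ E_{α,α}(-x) ≤ α Γ(2)/Γ(1+α) = α/Γ(1+α)`. -/
theorem mittagLeffler_contraction_bounds (α : ℝ) (hα0 : 0 < α) (hα1 : α < 1)
    (x : ℝ) (hx : 0 ≤ x) :
    0 ≤ mittagLeffler α 1 (-x) ∧ mittagLeffler α 1 (-x) ≤ 1 ∧
    0 ≤ mittagLeffler α α (-x) ∧
    mittagLeffler α α (-x) ≤ α * Real.Gamma 2 / Real.Gamma (1 + α) ∧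
    α * Real.Gamma 2 / Real.Gamma (1 + α) = α / Real.Gamma (1 + α) := by
  obtain ⟨hD₀_nonneg, hD₀_le⟩ := mittagLefflerDerivSeries_neg_mem_Icc 0 hα0 hα1 hx
  obtain ⟨hD₁_nonneg, hD₁_le⟩ := mittagLefflerDerivSeries_neg_mem_Icc 1 hα0 hα1 hx
  norm_num at hD₀_le hD₁_le
  rw [mittagLeffler_one_eq, mittagLeffler_self_eq hα0, Gamma_two, mul_one, add_comm 1 α]
  exact ⟨hD₀_nonneg, hD₀_le, by positivity, by rw [div_eq_mul_inv]; gcongr, rfl⟩
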